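/- Let m ≥ 1 be an integer, let λ₁,…,λ_m be nonnegative real numbers with Λ := λ₁+⋯+λ_m > 0, let t > 0, and let Z₁,…,Z_m be independent standard normal N(0,1) random variables. Then P( Σ_{i=1}^m λ_i Z_i² ≥ t ) ≤ m·√(2Λ/(πt))·e^{−t/(2Λ)}. -/

import Mathlib

/-!
Since `Σ λᵢ Zᵢ²` is `Λ` times a weighted average of the `Zᵢ²`, on the event `Σ λᵢ Zᵢ² ≥ t`
some `Zᵢ²` is at least `a = t / Λ`. A union bound then leaves the two-sided Gaussian tail
`P(|Z| ≥ √a)`, which the Mills-ratio estimate (on `[√a, ∞)` the density is at most `x / √a`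
times itself, and `x e^{-x²/2}` has an explicit primitive) bounds by `2 e^{-a/2} / √(2πa)`.
-/

open MeasureTheory ProbabilityTheory Real Set

theorem Finset.exists_div_sum_le_of_le_sum_mul {ι 𝕜 : Type*} [Field 𝕜] [LinearOrder 𝕜]
    [IsStrictOrderedRing 𝕜] {s : Finset ι} {w y : ι → 𝕜} {t : 𝕜}
    (hw₀ : ∀ i ∈ s, 0 ≤ w i) (hw : 0 < ∑ i ∈ s, w i) (h : t ≤ ∑ i ∈ s, w i * y i) :
    ∃ i ∈ s, t / ∑ i ∈ s, w i ≤ y i := by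
  obtain ⟨i, hi, hle⟩ := (convexOn_id (𝕜 := 𝕜) convex_univ).exists_ge_of_centerMass hw₀ hw
    (p := y) (fun _ _ => Set.mem_univ _)
  refine ⟨i, hi, le_trans ?_ hle⟩
  rw [id, Finset.centerMass, smul_eq_mul, inv_mul_eq_div]
  exact div_le_div_of_nonneg_right (by simpa using h) hw.le

theorem integral_Ioi_mul_exp_neg_sq_div_two (b : ℝ) :
    ∫ x in Ioi b, x * exp (-x ^ 2 / 2) = exp (-b ^ 2 / 2) := by
  have hint : IntegrableOn (fun x => x * exp (-x ^ 2 / 2)) (Ioi b) :=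
    (integrable_mul_exp_neg_mul_sq one_half_pos).integrableOn.congr_fun
      (fun x _ => by ring_nf) measurableSet_Ioi
  have hderiv (x : ℝ) (_ : x ∈ Ici b) :
      HasDerivAt (fun x => -exp (-x ^ 2 / 2)) (x * exp (-x ^ 2 / 2)) x :=
    ((hasDerivAt_pow 2 x).neg.div_const 2).exp.neg.congr_deriv <| by
      simp only [Pi.neg_apply]; push_cast; ring
  have hlim : Filter.Tendsto (fun x : ℝ => -exp (-x ^ 2 / 2)) Filter.atTop (nhds 0) := by
    simpa using (tendsto_exp_atBot.comp ((Filter.tendsto_neg_atTop_atBot.comp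
      (Filter.tendsto_pow_atTop two_ne_zero)).atBot_div_const two_pos)).neg
  rw [integral_Ioi_of_hasDerivAt_of_tendsto' hderiv hint hlim]
  ring

theorem gaussianReal_Iic_neg (v : NNReal) (b : ℝ) :
    gaussianReal 0 v (Iic (-b)) = gaussianReal 0 v (Ici b) := by
  conv_rhs =>
    rw [← neg_zero, ← gaussianReal_map_neg, Measure.map_apply measurable_neg measurableSet_Ici]
  congr 1
  ext x
  simp

theorem gaussianReal_Ici_le {b : ℝ} (hb : 0 < b) :
    gaussianReal 0 1 (Ici b) ≤ ENNReal.ofReal (exp (-b ^ 2 / 2) / (b * √(2 * π))) := by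
  have hpdf (x : ℝ) : gaussianPDFReal 0 1 x = (√(2 * π))⁻¹ * exp (-x ^ 2 / 2) := by
    simp [gaussianPDFReal]
  have hint : IntegrableOn (fun x => (b * √(2 * π))⁻¹ * (x * exp (-x ^ 2 / 2))) (Ici b) :=
    ((integrable_mul_exp_neg_mul_sq one_half_pos).integrableOn.congr_fun
      (fun x _ => by ring_nf) measurableSet_Ici).const_mul _
  rw [gaussianReal_apply_eq_integral 0 one_ne_zero]
  refine ENNReal.ofReal_le_ofReal ?_
  calc ∫ x in Ici b, gaussianPDFReal 0 1 x
      ≤ ∫ x in Ici b, (b * √(2 * π))⁻¹ * (x * exp (-x ^ 2 / 2)) := by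
        refine setIntegral_mono_on (integrable_gaussianPDFReal 0 1).integrableOn hint
          measurableSet_Ici fun x (hx : b ≤ x) => ?_
        rw [hpdf, show (b * √(2 * π))⁻¹ * (x * exp (-x ^ 2 / 2))
          = (√(2 * π))⁻¹ * exp (-x ^ 2 / 2) * (x / b) by ring]
        exact le_mul_of_one_le_right (by positivity) ((one_le_div hb).2 hx)
    _ = exp (-b ^ 2 / 2) / (b * √(2 * π)) := by
        rw [integral_const_mul, integral_Ici_eq_integral_Ioi,
          integral_Ioi_mul_exp_neg_sq_div_two, inv_mul_eq_div]

theorem gaussianReal_le_sq_le {a : ℝ} (ha : 0 < a) :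
    gaussianReal 0 1 {x | a ≤ x ^ 2} ≤ ENNReal.ofReal (√(2 / (π * a)) * exp (-a / 2)) := by
  have hb : 0 < √a := sqrt_pos.2 ha
  have hset : {x : ℝ | a ≤ x ^ 2} = Iic (-√a) ∪ Ici √a := by
    ext x
    rw [mem_ofPred_eq, ← sqrt_le_sqrt_iff (sq_nonneg x), sqrt_sq_eq_abs, le_abs', mem_union,
      mem_Iic, mem_Ici]
  have hconst : 2 * (exp (-√a ^ 2 / 2) / (√a * √(2 * π))) = √(2 / (π * a)) * exp (-a / 2) := by
    have h : √(2 / (π * a)) * (√a * √(2 * π)) = 2 := by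
      rw [← sqrt_mul (by positivity), ← sqrt_mul (by positivity),
        show 2 / (π * a) * (a * (2 * π)) = 2 ^ 2 by field_simp, sqrt_sq zero_le_two]
    rw [sq_sqrt ha.le]
    nth_rw 1 [← h]
    field_simp
  calc gaussianReal 0 1 {x | a ≤ x ^ 2}
      ≤ gaussianReal 0 1 (Iic (-√a)) + gaussianReal 0 1 (Ici √a) :=
        hset ▸ measure_union_le _ _
    _ = 2 * gaussianReal 0 1 (Ici √a) := by rw [gaussianReal_Iic_neg, two_mul]
    _ ≤ 2 * ENNReal.ofReal (exp (-√a ^ 2 / 2) / (√a * √(2 * π))) := by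
        gcongr
        exact gaussianReal_Ici_le hb
    _ = ENNReal.ofReal (√(2 / (π * a)) * exp (-a / 2)) := by
        rw [← hconst, ENNReal.ofReal_mul zero_le_two, ENNReal.ofReal_ofNat]

theorem measure_le_sq_le_of_map_eq_gaussianReal {Ω : Type*} [MeasurableSpace Ω] {P : Measure Ω}
    {X : Ω → ℝ} (hX : P.map X = gaussianReal 0 1) {a : ℝ} (ha : 0 < a) :
    P {ω | a ≤ X ω ^ 2} ≤ ENNReal.ofReal (√(2 / (π * a)) * exp (-a / 2)) := by
  have hXm : AEMeasurable X P := aemeasurable_of_map_neZero (hX ▸ inferInstance)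
  have hs : MeasurableSet {x : ℝ | a ≤ x ^ 2} := measurableSet_le measurable_const (by fun_prop)
  calc P {ω | a ≤ X ω ^ 2} = P.map X {x | a ≤ x ^ 2} :=
        (Measure.map_apply_of_aemeasurable hXm hs).symm
    _ ≤ _ := hX ▸ gaussianReal_le_sq_le ha

theorem weighted_chi_square_tail_bound_general
    {Ω : Type*} [MeasurableSpace Ω] (P : Measure Ω)
    (m : ℕ)
    (lam : Fin m → ℝ) (hlam : ∀ i, 0 ≤ lam i)
    (Λ : ℝ) (hΛdef : Λ = ∑ i, lam i) (hΛ : 0 < Λ)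
    (t : ℝ) (ht : 0 < t)
    (Z : Fin m → Ω → ℝ)
    (hZ : ∀ i, Measure.map (Z i) P = gaussianReal 0 1) :
    P {ω | t ≤ ∑ i, lam i * (Z i ω) ^ 2} ≤
      ENNReal.ofReal (m * Real.sqrt (2 * Λ / (π * t)) * Real.exp (-t / (2 * Λ))) := by
  have hsub : {ω | t ≤ ∑ i, lam i * (Z i ω) ^ 2} ⊆ ⋃ i, {ω | t / Λ ≤ (Z i ω) ^ 2} := by
    intro ω hω
    obtain ⟨i, -, hi⟩ :=
      Finset.exists_div_sum_le_of_le_sum_mul (fun i _ => hlam i) (hΛdef ▸ hΛ) hω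
    exact mem_iUnion.2 ⟨i, hΛdef ▸ hi⟩
  have hconst : √(2 / (π * (t / Λ))) * exp (-(t / Λ) / 2)
      = √(2 * Λ / (π * t)) * exp (-t / (2 * Λ)) := by
    congr 2 <;> field_simp
  calc P {ω | t ≤ ∑ i, lam i * (Z i ω) ^ 2}
      ≤ ∑ i, P {ω | t / Λ ≤ (Z i ω) ^ 2} :=
        (measure_mono hsub).trans (measure_iUnion_fintype_le _ _)
    _ ≤ ∑ _i : Fin m, ENNReal.ofReal (√(2 * Λ / (π * t)) * exp (-t / (2 * Λ))) :=
        Finset.sum_le_sum fun i _ =>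
          hconst ▸ measure_le_sq_le_of_map_eq_gaussianReal (hZ i) (div_pos ht hΛ)
    _ = ENNReal.ofReal (m * √(2 * Λ / (π * t)) * exp (-t / (2 * Λ))) := by
        rw [Finset.sum_const, Finset.card_univ, Fintype.card_fin, nsmul_eq_mul,
          ← ENNReal.ofReal_natCast, ← ENNReal.ofReal_mul (Nat.cast_nonneg m), mul_assoc]

/-- Tail bound for a nonnegative linear combination of squared
independent standard normals:
`P(Σ λᵢ Zᵢ² ≥ t) ≤ m √(2Λ/(πt)) e^{-t/(2Λ)}` where `Λ = Σ λᵢ > 0`. -/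
theorem weighted_chi_square_tail_bound
    {Ω : Type*} [MeasurableSpace Ω] (P : Measure Ω) [IsProbabilityMeasure P]
    (m : ℕ) (hm : 1 ≤ m)
    (lam : Fin m → ℝ) (hlam : ∀ i, 0 ≤ lam i)
    (Λ : ℝ) (hΛdef : Λ = ∑ i, lam i) (hΛ : 0 < Λ)
    (t : ℝ) (ht : 0 < t)
    (Z : Fin m → Ω → ℝ)
    (hZmeas : ∀ i, Measurable (Z i))
    (hZ : ∀ i, Measure.map (Z i) P = gaussianReal 0 1)
    (hindep : iIndepFun Z P) :
    P {ω | t ≤ ∑ i, lam i * (Z i ω) ^ 2} ≤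
      ENNReal.ofReal (m * Real.sqrt (2 * Λ / (π * t)) * Real.exp (-t / (2 * Λ))) :=
  weighted_chi_square_tail_bound_general P m lam hlam Λ hΛdef hΛ t ht Z hZ
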